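/- arXiv:1102.0190 — 2 statements merged into one kernel-verified Lean document; each statement's English description precedes it below -/
import Mathlib

section
/- Consider the C¹ vector field X : ℝ² → ℝ² defined by X(x, y) = (−(x+1)³ + 1, −(x+1)²(y+1) + 1). Then: (i) X(0,0) = (0,0) and (0,0) is a hyperbolic singularity of X; (ii) for every point p = (x, y) with x ≠ −1 (hence for Lebesgue-almost every p), the derivative DX(p) is Hurwitz, with trace(DX(p)) = −4(x+1)² and det(DX(p)) = 3(x+1)⁴; (iii) X is not injective as a map (it sends the whole line {x = −1} to the point (1,1)); and (iv) 0 is globally asymptotically stable: every maximal forward solution γ of γ' = X∘γ is defined on [0, ∞) and satisfies γ(t) → 0 as t → ∞. -/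
open MeasureTheory Filter Topology ENNReal

/-- The Jacobian matrix of a planar vector field `X : ℝ² → ℝ²` at a point `p`,
built from the total (Fréchet) derivative of `X` at `p`. -/
noncomputable def jacMat (X : ℝ × ℝ → ℝ × ℝ) (p : ℝ × ℝ) : Matrix (Fin 2) (Fin 2) ℝ :=
  !![(fderiv ℝ X p (1, 0)).1, (fderiv ℝ X p (0, 1)).1;
     (fderiv ℝ X p (1, 0)).2, (fderiv ℝ X p (0, 1)).2]

/-- A real 2×2 matrix is Hurwitz if every complex root of its characteristic polynomial
`z² - trace(A)·z + det(A)` (that is, every eigenvalue of `A`) has negative real part. -/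
def IsHurwitz (A : Matrix (Fin 2) (Fin 2) ℝ) : Prop :=
  ∀ z : ℂ, z ^ 2 - (A.trace : ℂ) * z + (A.det : ℂ) = 0 → z.re < 0

/-- A real 2×2 matrix has purely imaginary eigenvalues if every complex root of its
characteristic polynomial `z² - trace(A)·z + det(A)` has zero real part and nonzero
imaginary part (i.e. is of the form `b·i` with `b ≠ 0`). -/
def HasPurelyImaginaryEigenvalues (A : Matrix (Fin 2) (Fin 2) ℝ) : Prop :=
  ∀ z : ℂ, z ^ 2 - (A.trace : ℂ) * z + (A.det : ℂ) = 0 → z.re = 0 ∧ z.im ≠ 0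

/-- `p` is a hyperbolic singularity of `X`: `X(p) = 0` and every eigenvalue of `DX(p)`
(root of the characteristic polynomial of the Jacobian matrix) has nonzero real part. -/
def IsHyperbolicSingularity (X : ℝ × ℝ → ℝ × ℝ) (p : ℝ × ℝ) : Prop :=
  X p = 0 ∧ ∀ z : ℂ,
    z ^ 2 - ((jacMat X p).trace : ℂ) * z + ((jacMat X p).det : ℂ) = 0 → z.re ≠ 0

/-- `p` is a simple singularity of `X`: `X(p) = 0` and `det(DX(p)) ≠ 0`. -/
def IsSimpleSingularity (X : ℝ × ℝ → ℝ × ℝ) (p : ℝ × ℝ) : Prop :=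
  X p = 0 ∧ (jacMat X p).det ≠ 0

/-- `γ` is a forward solution of `γ'(t) = X(γ(t))` on the interval `[0, b)`
(where `b = ⊤` means `[0, ∞)`). -/
def IsForwardSolOn (X : ℝ × ℝ → ℝ × ℝ) (γ : ℝ → ℝ × ℝ) (b : ℝ≥0∞) : Prop :=
  ∀ t : ℝ, 0 ≤ t → ENNReal.ofReal t < b → HasDerivAt γ (X (γ t)) t

/-- `γ` is a maximal forward solution of `γ' = X ∘ γ` on `[0, b)`: it solves the ODE
there and admits no extension to a solution on a strictly larger forward interval. -/
def IsMaximalForwardSol (X : ℝ × ℝ → ℝ × ℝ) (γ : ℝ → ℝ × ℝ) (b : ℝ≥0∞) : Prop :=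
  0 < b ∧ IsForwardSolOn X γ b ∧
    ∀ (γ' : ℝ → ℝ × ℝ) (b' : ℝ≥0∞), b < b' → IsForwardSolOn X γ' b' →
      (∀ t : ℝ, 0 ≤ t → ENNReal.ofReal t < b → γ' t = γ t) → False

open Set



noncomputable def Xfun : ℝ × ℝ → ℝ × ℝ :=
  fun p => (-(p.1 + 1) ^ 3 + 1, -(p.1 + 1) ^ 2 * (p.2 + 1) + 1)

noncomputable def Dfun (p : ℝ × ℝ) : ℝ × ℝ →L[ℝ] ℝ × ℝ :=
  ((-3 * (p.1 + 1) ^ 2) • ContinuousLinearMap.fst ℝ ℝ ℝ).prod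
    ((-2 * (p.1 + 1) * (p.2 + 1)) • ContinuousLinearMap.fst ℝ ℝ ℝ
      + (-(p.1 + 1) ^ 2) • ContinuousLinearMap.snd ℝ ℝ ℝ)

lemma hasFDerivAt_Xfun (p : ℝ × ℝ) : HasFDerivAt Xfun (Dfun p) p := by
  have h0 : HasFDerivAt (fun q : ℝ × ℝ => q.1 + 1) (ContinuousLinearMap.fst ℝ ℝ ℝ) p :=
    hasFDerivAt_fst.add_const 1
  have h0' : HasFDerivAt (fun q : ℝ × ℝ => q.2 + 1) (ContinuousLinearMap.snd ℝ ℝ ℝ) p :=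
    hasFDerivAt_snd.add_const 1
  have hsq := h0.mul h0
  have hcube := hsq.mul h0
  have h1 : HasFDerivAt (fun q : ℝ × ℝ => -(q.1 + 1) ^ 3 + 1)
      ((-3 * (p.1 + 1) ^ 2) • ContinuousLinearMap.fst ℝ ℝ ℝ) p := by
    have : (fun q : ℝ × ℝ => -(q.1 + 1) ^ 3 + 1)
        = (fun q : ℝ × ℝ => -(((q.1 + 1) * (q.1 + 1)) * (q.1 + 1)) + 1) := by
      funext q; ring
    rw [this]
    have := (hcube.neg).add_const 1
    exact this.congr_fderiv (by ext v <;> simp <;> ring)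
  have h2 : HasFDerivAt (fun q : ℝ × ℝ => -(q.1 + 1) ^ 2 * (q.2 + 1) + 1)
      ((-2 * (p.1 + 1) * (p.2 + 1)) • ContinuousLinearMap.fst ℝ ℝ ℝ
        + (-(p.1 + 1) ^ 2) • ContinuousLinearMap.snd ℝ ℝ ℝ) p := by
    have : (fun q : ℝ × ℝ => -(q.1 + 1) ^ 2 * (q.2 + 1) + 1)
        = (fun q : ℝ × ℝ => -(((q.1 + 1) * (q.1 + 1)) * (q.2 + 1)) + 1) := by
      funext q; ring
    rw [this]
    have := ((hsq.mul h0').neg).add_const 1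
    exact this.congr_fderiv (by ext v <;> simp <;> ring)
  exact h1.prodMk h2

lemma contDiff_Xfun : ContDiff ℝ 1 Xfun :=
  (((contDiff_fst.add contDiff_const).pow 3).neg.add contDiff_const).prodMk
    ((((contDiff_fst.add contDiff_const).pow 2).neg.mul
      (contDiff_snd.add contDiff_const)).add contDiff_const)

lemma jacMat_Xfun (p : ℝ × ℝ) :
    jacMat Xfun p = !![-3 * (p.1 + 1) ^ 2, 0; -2 * (p.1 + 1) * (p.2 + 1), -(p.1 + 1) ^ 2] := by
  rw [jacMat, (hasFDerivAt_Xfun p).fderiv]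
  simp [Dfun, ContinuousLinearMap.prod_apply]

lemma trace_jac (p : ℝ × ℝ) : (jacMat Xfun p).trace = -4 * (p.1 + 1) ^ 2 := by
  rw [jacMat_Xfun, Matrix.trace_fin_two_of]; ring

lemma det_jac (p : ℝ × ℝ) : (jacMat Xfun p).det = 3 * (p.1 + 1) ^ 4 := by
  rw [jacMat_Xfun, Matrix.det_fin_two_of]; ring

lemma roots_jac (p : ℝ × ℝ) (z : ℂ)
    (hz : z ^ 2 - ((jacMat Xfun p).trace : ℂ) * z + ((jacMat Xfun p).det : ℂ) = 0) :
    z = -(((p.1 + 1) ^ 2 : ℝ) : ℂ) ∨ z = -3 * (((p.1 + 1) ^ 2 : ℝ) : ℂ) := by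
  rw [trace_jac, det_jac] at hz
  push_cast at hz
  have hfac : (z + ((p.1 : ℂ) + 1) ^ 2) * (z + 3 * ((p.1 : ℂ) + 1) ^ 2) = 0 := by
    linear_combination hz
  rcases mul_eq_zero.1 hfac with h | h
  · left; push_cast; linear_combination h
  · right; push_cast; linear_combination h


lemma hasDerivAt_sol_fst {γ : ℝ → ℝ × ℝ} {t : ℝ} (h : HasDerivAt γ (Xfun (γ t)) t) :
    HasDerivAt (fun s => (γ s).1) (1 - ((γ t).1 + 1) ^ 3) t := by
  have h1 : HasDerivAt (fun s => (γ s).1) (Xfun (γ t)).1 t := by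
    exact (ContinuousLinearMap.fst ℝ ℝ ℝ).hasFDerivAt.comp_hasDerivAt t h
  convert h1 using 1
  simp [Xfun]; ring

lemma hasDerivAt_sol_snd {γ : ℝ → ℝ × ℝ} {t : ℝ} (h : HasDerivAt γ (Xfun (γ t)) t) :
    HasDerivAt (fun s => (γ s).2) (1 - ((γ t).1 + 1) ^ 2 * ((γ t).2 + 1)) t := by
  have h1 : HasDerivAt (fun s => (γ s).2) (Xfun (γ t)).2 t := by
    exact (ContinuousLinearMap.snd ℝ ℝ ℝ).hasFDerivAt.comp_hasDerivAt t h
  convert h1 using 1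
  simp [Xfun]; ring

lemma hasDerivAt_sol_w {γ : ℝ → ℝ × ℝ} {t : ℝ} (h : HasDerivAt γ (Xfun (γ t)) t) :
    HasDerivAt (fun s => ((γ s).1) ^ 2)
      (2 * (γ t).1 * (1 - ((γ t).1 + 1) ^ 3)) t := by
  have := (hasDerivAt_sol_fst h).pow 2
  exact this.congr_deriv (by ring)

lemma hasDerivAt_sol_E2 {γ : ℝ → ℝ × ℝ} {t : ℝ} (h : HasDerivAt γ (Xfun (γ t)) t) :
    HasDerivAt (fun s => 1 + ((γ s).2 + 1) ^ 2)
      (2 * ((γ t).2 + 1) * (1 - ((γ t).1 + 1) ^ 2 * ((γ t).2 + 1))) t := by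
  have := (((hasDerivAt_sol_snd h).add_const 1).pow 2).const_add 1
  exact this.congr_deriv (by ring)

lemma hasDerivAt_sol_E {γ : ℝ → ℝ × ℝ} {t : ℝ} (h : HasDerivAt γ (Xfun (γ t)) t) :
    HasDerivAt (fun s => ((γ s).2) ^ 2)
      (2 * (γ t).2 * (1 - ((γ t).1 + 1) ^ 2 * ((γ t).2 + 1))) t := by
  have := (hasDerivAt_sol_snd h).pow 2
  exact this.congr_deriv (by ring)

/-- Monotone decay along a differential inequality `w' ≤ -K w` on a convex set. -/
lemma decay_lemma {w w' : ℝ → ℝ} {K : ℝ} {s : Set ℝ} (hs : Convex ℝ s)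
    (hd : ∀ t ∈ s, HasDerivAt w (w' t) t)
    (hle : ∀ t ∈ s, w' t ≤ -K * w t) :
    ∀ a ∈ s, ∀ t ∈ s, a ≤ t → w t * Real.exp (K * t) ≤ w a * Real.exp (K * a) := by
  have hD : ∀ t ∈ s, HasDerivAt (fun t => w t * Real.exp (K * t))
      ((w' t + K * w t) * Real.exp (K * t)) t := by
    intro t ht
    have he : HasDerivAt (fun t : ℝ => Real.exp (K * t)) (Real.exp (K * t) * K) t := by
      simpa using ((hasDerivAt_id t).const_mul K).exp
    have := (hd t ht).mul he
    exact this.congr_deriv (by ring)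
  have hanti : AntitoneOn (fun t => w t * Real.exp (K * t)) s := by
    apply antitoneOn_of_deriv_nonpos hs
    · exact fun t ht => ((hD t ht).continuousAt).continuousWithinAt
    · exact fun t ht => ((hD t (interior_subset ht)).differentiableAt).differentiableWithinAt
    · intro t ht
      rw [(hD t (interior_subset ht)).deriv]
      have h1 := hle t (interior_subset ht)
      have h2 := Real.exp_pos (K * t)
      nlinarith
  exact fun a ha t ht hat => hanti ha ht hat

/-- Barrier lemma: if `f ≥ 0` and `f' ≤ -δ` whenever `f ≥ c` (for `t ≥ T`),
then eventually `f ≤ c`. -/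
lemma barrier_lemma {f f' : ℝ → ℝ} {T c δ : ℝ} (hδ : 0 < δ)
    (hd : ∀ t, T ≤ t → HasDerivAt f (f' t) t)
    (hnn : ∀ t, T ≤ t → 0 ≤ f t)
    (hdec : ∀ t, T ≤ t → c ≤ f t → f' t ≤ -δ) :
    ∀ᶠ t in atTop, f t ≤ c := by
  have hcont : ∀ t, T ≤ t → ContinuousAt f t := fun t ht => (hd t ht).continuousAt
  -- step 1 : some point below c
  have step1 : ∃ t1, T ≤ t1 ∧ f t1 < c := by
    by_contra h
    push_neg at h
    have hf' : ∀ t, T ≤ t → f' t ≤ -δ := fun t ht => hdec t ht (h t ht)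
    have hg : ∀ t, T ≤ t → HasDerivAt (fun t => f t + δ * t) (f' t + δ) t := by
      intro t ht
      exact ((hd t ht).add ((hasDerivAt_id t).const_mul δ)).congr_deriv (by ring)
    have hanti : AntitoneOn (fun t => f t + δ * t) (Ici T) := by
      apply antitoneOn_of_deriv_nonpos (convex_Ici T)
      · exact fun t ht => (hg t ht).continuousAt.continuousWithinAt
      · intro t ht
        rw [interior_Ici] at ht
        exact (hg t ht.le).differentiableAt.differentiableWithinAt
      · intro t ht
        rw [interior_Ici] at ht
        rw [(hg t ht.le).deriv]
        have := hf' t ht.le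
        linarith
    set t2 := max T ((f T + δ * T) / δ + 1) with ht2
    have hT2 : T ≤ t2 := le_max_left _ _
    have h2' : (f T + δ * T) / δ + 1 ≤ t2 := le_max_right _ _
    have h5 : f t2 + δ * t2 ≤ f T + δ * T := hanti (self_mem_Ici) (mem_Ici.2 hT2) hT2
    have hnn2 := hnn t2 hT2
    have h6 : δ * t2 ≤ f T + δ * T := by linarith
    have h7 : t2 ≤ (f T + δ * T) / δ := (le_div_iff₀ hδ).2 (by linarith)
    linarith
  obtain ⟨t1, ht1T, ht1⟩ := step1
  -- step 2 : stays below c after t1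
  have step2 : ∀ t2, t1 ≤ t2 → f t2 ≤ c := by
    intro t2 ht12
    by_contra hgt
    push_neg at hgt
    have ht1t2 : t1 < t2 := lt_of_le_of_ne ht12 (by rintro rfl; linarith)
    set S := {t ∈ Icc t1 t2 | f t ≤ c} with hS
    have hcontOn : ContinuousOn f (Icc t1 t2) := fun t ht =>
      (hcont t (ht1T.trans ht.1)).continuousWithinAt
    have hclosed : IsClosed S :=
      hcontOn.preimage_isClosed_of_isClosed isClosed_Icc isClosed_Iic
    have hne : S.Nonempty := ⟨t1, ⟨le_refl _, ht1t2.le⟩, ht1.le⟩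
    have hbdd : BddAbove S := ⟨t2, fun t ht => ht.1.2⟩
    set s := sSup S with hs
    have hsS : s ∈ S := hclosed.csSup_mem hne hbdd
    have hst2 : s < t2 := lt_of_le_of_ne hsS.1.2 (fun h => by rw [h] at hsS; linarith [hsS.2])
    have habove : ∀ t ∈ Ioc s t2, c < f t := by
      intro t ht
      rcases lt_or_ge c (f t) with h' | h'
      · exact h'
      · exfalso
        have htS : t ∈ S := ⟨⟨hsS.1.1.trans ht.1.le, ht.2⟩, h'⟩
        have := le_csSup hbdd htS
        exact absurd ht.1 (not_lt.2 this)
    have hanti : AntitoneOn f (Icc s t2) := by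
      apply antitoneOn_of_deriv_nonpos (convex_Icc s t2)
      · exact fun t ht => (hcont t (ht1T.trans (hsS.1.1.trans ht.1))).continuousWithinAt
      · intro t ht
        rw [interior_Icc] at ht
        exact (hd t (ht1T.trans (hsS.1.1.trans ht.1.le))).differentiableAt.differentiableWithinAt
      · intro t ht
        rw [interior_Icc] at ht
        have hTt : T ≤ t := ht1T.trans (hsS.1.1.trans ht.1.le)
        rw [(hd t hTt).deriv]
        have := hdec t hTt (habove t ⟨ht.1, ht.2.le⟩).le
        linarith
    have := hanti (left_mem_Icc.2 hst2.le) (right_mem_Icc.2 hst2.le) hst2.le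
    linarith [hsS.2]
  exact eventually_atTop.2 ⟨t1, step2⟩

/-- Existence of a limit at the endpoint for a function with bounded derivative. -/
lemma exists_limit_of_lipschitz {f : ℝ → ℝ × ℝ} {c L : ℝ} (hc : 0 < c) (hL : 0 ≤ L)
    (hlip : ∀ s ∈ Ico (0:ℝ) c, ∀ t ∈ Ico (0:ℝ) c, ‖f t - f s‖ ≤ L * |t - s|) :
    ∃ q, Tendsto f (𝓝[<] c) (𝓝 q) := by
  have hne : (𝓝[<] c).NeBot := nhdsLT_neBot c
  have hcau : Cauchy (Filter.map f (𝓝[<] c)) := by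
    rw [Metric.cauchy_iff]
    refine ⟨Filter.map_neBot, fun ε hε => ?_⟩
    set δ := min c (ε / (2 * (L + 1))) with hδdef
    have hδ : 0 < δ := lt_min hc (by positivity)
    refine ⟨f '' Ioo (c - δ) c, image_mem_map ?_, ?_⟩
    · exact Ioo_mem_nhdsLT_of_mem ⟨by linarith, le_refl c⟩
    · rintro x ⟨s, hs, rfl⟩ y ⟨t, ht, rfl⟩
      have hs' : s ∈ Ico (0:ℝ) c := ⟨by have := min_le_left c (ε / (2 * (L + 1))); linarith [hs.1], hs.2⟩
      have ht' : t ∈ Ico (0:ℝ) c := ⟨by have := min_le_left c (ε / (2 * (L + 1))); linarith [ht.1], ht.2⟩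
      have hst : |s - t| < δ := by
        rw [abs_lt]
        constructor <;> linarith [hs.1, hs.2, ht.1, ht.2]
      have := hlip t ht' s hs'
      have hdist : dist (f s) (f t) ≤ L * |s - t| := by
        rw [dist_eq_norm]; exact this
      have : L * |s - t| < ε := by
        have h1 : L * |s - t| ≤ L * δ := by
          apply mul_le_mul_of_nonneg_left hst.le hL
        have h2 : L * δ ≤ L * (ε / (2 * (L + 1))) :=
          mul_le_mul_of_nonneg_left (min_le_right _ _) hL
        have h3 : L * (ε / (2 * (L + 1))) < ε := by
          rw [mul_div_assoc']
          rw [div_lt_iff₀ (by positivity)]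
          nlinarith
        linarith
      linarith [hdist]
  obtain ⟨q, hq⟩ := CompleteSpace.complete hcau
  exact ⟨q, hq⟩

/-- Bounds on a forward solution on `[0, c)`. -/
lemma sol_bounds {γ : ℝ → ℝ × ℝ} {c : ℝ} (hc : 0 < c)
    (hsol : ∀ t, 0 ≤ t → t < c → HasDerivAt γ (Xfun (γ t)) t) :
    ∃ M N : ℝ, 1 ≤ M ∧ 1 ≤ N ∧
      ∀ t ∈ Ico (0:ℝ) c, |(γ t).1 + 1| ≤ M ∧ |(γ t).2 + 1| ≤ N := by
  have hsol' : ∀ t ∈ Ico (0:ℝ) c, HasDerivAt γ (Xfun (γ t)) t := fun t ht => hsol t ht.1 ht.2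
  -- first coordinate
  have hw : ∀ t ∈ Ico (0:ℝ) c, ((γ t).1) ^ 2 * Real.exp (0 * t)
      ≤ ((γ 0).1) ^ 2 * Real.exp (0 * 0) := by
    intro t ht
    refine decay_lemma (convex_Ico 0 c) (fun s hs => hasDerivAt_sol_w (hsol' s hs)) ?_
      0 (left_mem_Ico.2 hc) t ht ht.1
    intro s hs
    set x := (γ s).1
    have key : 2 * x * (1 - (x + 1) ^ 3) = -(1/2) * (x * (2*x + 3))^2 - (3/2) * x^2 := by ring
    rw [key]
    nlinarith [sq_nonneg (x * (2*x + 3)), sq_nonneg x]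
  have hx : ∀ t ∈ Ico (0:ℝ) c, |(γ t).1| ≤ |(γ 0).1| := by
    intro t ht
    have := hw t ht
    simp only [zero_mul, Real.exp_zero, mul_one] at this
    rw [← Real.sqrt_sq_eq_abs, ← Real.sqrt_sq_eq_abs]
    exact Real.sqrt_le_sqrt this
  -- second coordinate
  have hE2 : ∀ t ∈ Ico (0:ℝ) c, (1 + ((γ t).2 + 1) ^ 2) * Real.exp ((-2) * t)
      ≤ (1 + ((γ 0).2 + 1) ^ 2) * Real.exp ((-2) * 0) := by
    intro t ht
    refine decay_lemma (convex_Ico 0 c) (fun s hs => hasDerivAt_sol_E2 (hsol' s hs)) ?_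
      0 (left_mem_Ico.2 hc) t ht ht.1
    intro s hs
    set x := (γ s).1
    set y := (γ s).2
    have h1 : 2 * (y + 1) * (1 - (x + 1) ^ 2 * (y + 1)) ≤ 2 * (y+1) - 0 := by
      nlinarith [sq_nonneg ((x+1) * (y+1))]
    nlinarith [sq_nonneg (y + 1 - 1), sq_nonneg (y+1), sq_nonneg ((x+1)*(y+1))]
  have hy : ∀ t ∈ Ico (0:ℝ) c, |(γ t).2 + 1| ≤ (1 + ((γ 0).2 + 1) ^ 2) * Real.exp (2 * c) := by
    intro t ht
    have h := hE2 t ht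
    simp only [mul_zero, Real.exp_zero, mul_one, neg_mul] at h
    have hepos := Real.exp_pos (2 * t)
    have h2 : 1 + ((γ t).2 + 1) ^ 2 ≤ (1 + ((γ 0).2 + 1) ^ 2) * Real.exp (2 * t) := by
      have h' : (1 + ((γ t).2 + 1) ^ 2) * Real.exp (-(2 * t)) ≤ 1 + ((γ 0).2 + 1) ^ 2 := by
        exact h
      calc 1 + ((γ t).2 + 1) ^ 2
          = (1 + ((γ t).2 + 1) ^ 2) * Real.exp (-(2*t)) * Real.exp (2*t) := by
            rw [mul_assoc, ← Real.exp_add]; simp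
        _ ≤ (1 + ((γ 0).2 + 1) ^ 2) * Real.exp (2*t) :=
            mul_le_mul_of_nonneg_right h' hepos.le
    have h3 : Real.exp (2 * t) ≤ Real.exp (2 * c) :=
      Real.exp_le_exp.2 (by nlinarith [ht.2, ht.1])
    have h4 : 1 + ((γ 0).2 + 1) ^ 2 ≥ 0 := by positivity
    have h5 : |(γ t).2 + 1| ≤ 1 + ((γ t).2 + 1) ^ 2 := by
      nlinarith [sq_nonneg (|(γ t).2 + 1| - 1), sq_abs ((γ t).2 + 1), abs_nonneg ((γ t).2 + 1)]
    calc |(γ t).2 + 1| ≤ 1 + ((γ t).2 + 1) ^ 2 := h5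
      _ ≤ (1 + ((γ 0).2 + 1) ^ 2) * Real.exp (2*t) := h2
      _ ≤ (1 + ((γ 0).2 + 1) ^ 2) * Real.exp (2*c) := by
          apply mul_le_mul_of_nonneg_left h3 h4
  refine ⟨|(γ 0).1| + 2, max 1 ((1 + ((γ 0).2 + 1) ^ 2) * Real.exp (2 * c)), ?_, le_max_left _ _, ?_⟩
  · have := abs_nonneg ((γ 0).1); linarith
  · intro t ht
    constructor
    · have h1 := hx t ht
      calc |(γ t).1 + 1| ≤ |(γ t).1| + 1 := by simpa using abs_add_le (γ t).1 1
        _ ≤ |(γ 0).1| + 2 := by linarith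
    · exact (hy t ht).trans (le_max_right _ _)

lemma continuous_Xfun : Continuous Xfun := contDiff_Xfun.continuous

/-- The norm of the vector field along a bounded solution is bounded. -/
lemma Xfun_norm_le {p : ℝ × ℝ} {M N : ℝ} (hM : 1 ≤ M) (hN : 1 ≤ N)
    (h1 : |p.1 + 1| ≤ M) (h2 : |p.2 + 1| ≤ N) :
    ‖Xfun p‖ ≤ 1 + M ^ 3 + M ^ 2 * N := by
  have hM0 : (0:ℝ) ≤ M := by linarith
  have hN0 : (0:ℝ) ≤ N := by linarith
  have e1 : |(Xfun p).1| ≤ 1 + M ^ 3 := by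
    have : |-(p.1+1)^3 + 1| ≤ |(p.1+1)|^3 + 1 := by
      calc |-(p.1+1)^3 + 1| ≤ |(-(p.1+1)^3)| + |(1:ℝ)| := abs_add_le _ _
        _ = |(p.1+1)|^3 + 1 := by rw [abs_neg, abs_pow]; simp
    have h3 : |(p.1+1)|^3 ≤ M^3 := by
      apply pow_le_pow_left₀ (abs_nonneg _) h1
    simp only [Xfun]
    linarith
  have e2 : |(Xfun p).2| ≤ 1 + M ^ 2 * N := by
    have : |-(p.1+1)^2 * (p.2+1) + 1| ≤ |(p.1+1)|^2 * |(p.2+1)| + 1 := by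
      calc |-(p.1+1)^2 * (p.2+1) + 1| ≤ |(-(p.1+1)^2 * (p.2+1))| + |(1:ℝ)| := abs_add_le _ _
        _ = |(p.1+1)|^2 * |(p.2+1)| + 1 := by
            rw [abs_mul, abs_neg, abs_pow]; simp
    have h3 : |(p.1+1)|^2 * |(p.2+1)| ≤ M^2 * N := by
      apply mul_le_mul (pow_le_pow_left₀ (abs_nonneg _) h1 2) h2 (abs_nonneg _) (by positivity)
    simp only [Xfun]
    linarith
  rw [Prod.norm_def]
  apply max_le
  · rw [Real.norm_eq_abs]; nlinarith [pow_nonneg hM0 2, pow_nonneg hM0 3]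
  · rw [Real.norm_eq_abs]; nlinarith [pow_nonneg hM0 3, pow_nonneg hM0 2]

/-- A forward solution on a finite interval has a limit at the right endpoint. -/
lemma sol_limit {γ : ℝ → ℝ × ℝ} {c : ℝ} (hc : 0 < c)
    (hsol : ∀ t, 0 ≤ t → t < c → HasDerivAt γ (Xfun (γ t)) t) :
    ∃ q, Tendsto γ (𝓝[<] c) (𝓝 q) := by
  obtain ⟨M, N, hM, hN, hb⟩ := sol_bounds hc hsol
  set L := 1 + M ^ 3 + M ^ 2 * N with hL
  have hL0 : 0 ≤ L := by nlinarith
  have hlip : ∀ s ∈ Ico (0:ℝ) c, ∀ t ∈ Ico (0:ℝ) c, ‖γ t - γ s‖ ≤ L * |t - s| := by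
    intro s hs t ht
    have := Convex.norm_image_sub_le_of_norm_hasDerivWithin_le
      (f := γ) (f' := fun t => Xfun (γ t)) (s := Ico 0 c) (C := L)
      (fun τ hτ => (hsol τ hτ.1 hτ.2).hasDerivWithinAt)
      (fun τ hτ => Xfun_norm_le hM hN (hb τ hτ).1 (hb τ hτ).2)
      (convex_Ico 0 c) hs ht
    simpa [Real.norm_eq_abs] using this
  exact exists_limit_of_lipschitz hc hL0 hlip

/-- A forward solution on a finite interval `[0,c)` can be extended to `[0, c+ε)`. -/
lemma sol_extension {γ : ℝ → ℝ × ℝ} {c : ℝ} (hc : 0 < c)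
    (hsol : ∀ t, 0 ≤ t → t < c → HasDerivAt γ (Xfun (γ t)) t) :
    ∃ (Γ : ℝ → ℝ × ℝ) (ε : ℝ), 0 < ε ∧
      (∀ t, 0 ≤ t → t < c + ε → HasDerivAt Γ (Xfun (Γ t)) t) ∧
      (∀ t, 0 ≤ t → t < c → Γ t = γ t) := by
  obtain ⟨q, hq⟩ := sol_limit hc hsol
  obtain ⟨f, hfc, ε, hε, hf⟩ :=
    ContDiffAt.exists_forall_mem_closedBall_exists_eq_forall_mem_Ioo_hasDerivAt₀ (contDiff_Xfun.contDiffAt (x := q)) c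
  set Γ : ℝ → ℝ × ℝ := fun t => if t < c then γ t else f t with hΓdef
  have hΓc : Γ c = q := by rw [hΓdef]; simp [hfc]
  have hΓlt : ∀ t, t < c → Γ t = γ t := fun t ht => if_pos ht
  have hΓge : ∀ t, c ≤ t → Γ t = f t := fun t ht => if_neg (not_lt.2 ht)
  -- solutions on each piece
  have hcase1 : ∀ t, 0 ≤ t → t < c → HasDerivAt Γ (Xfun (γ t)) t := by
    intro t h0 h1
    have heq : Γ =ᶠ[𝓝 t] γ := by
      filter_upwards [Iio_mem_nhds h1] with s hs
      exact hΓlt s hs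
    exact (heq.hasDerivAt_iff).2 (hsol t h0 h1)
  have hcase3 : ∀ t, c < t → t < c + ε → HasDerivAt Γ (Xfun (Γ t)) t := by
    intro t h1 h2
    have heq : Γ =ᶠ[𝓝 t] f := by
      filter_upwards [Ioi_mem_nhds h1] with s hs
      exact hΓge s (le_of_lt hs)
    rw [hΓge t h1.le]
    exact (heq.hasDerivAt_iff).2 (hf t ⟨by linarith, h2⟩)
  -- the patch point
  have hcase2 : HasDerivAt Γ (Xfun (Γ c)) c := by
    rw [hΓc]
    have hB : HasDerivWithinAt Γ (Xfun q) (Iic c) c := by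
      apply hasDerivWithinAt_Iic_of_tendsto_deriv (s := Ioo 0 c)
      · intro τ hτ
        exact (hcase1 τ hτ.1.le hτ.2).differentiableAt.differentiableWithinAt
      · unfold ContinuousWithinAt
        rw [hΓc]
        refine (hq.mono_left (nhdsWithin_mono c Ioo_subset_Iio_self)).congr' ?_
        filter_upwards [self_mem_nhdsWithin] with τ hτ
        exact (hΓlt τ hτ.2).symm
      · exact Ioo_mem_nhdsLT_of_mem ⟨hc, le_refl c⟩
      · have h1 : Tendsto (fun τ => Xfun (γ τ)) (𝓝[<] c) (𝓝 (Xfun q)) :=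
          (continuous_Xfun.continuousAt).tendsto.comp hq
        refine h1.congr' ?_
        filter_upwards [Ioo_mem_nhdsLT_of_mem (⟨hc, le_refl c⟩ : c ∈ Ioc 0 c)] with τ hτ
        exact ((hcase1 τ hτ.1.le hτ.2).deriv).symm
    have hA : HasDerivWithinAt Γ (Xfun q) (Ici c) c := by
      have hfd : HasDerivAt f (Xfun q) c := by
        have := hf c ⟨by linarith, by linarith⟩
        rwa [hfc] at this
      exact (hfd.hasDerivWithinAt).congr (fun τ hτ => hΓge τ hτ) (hΓc.trans hfc.symm)
    have := hB.union hA
    rw [Iic_union_Ici] at this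
    exact hasDerivWithinAt_univ.1 this
  refine ⟨Γ, ε, hε, ?_, fun t _ ht => hΓlt t ht⟩
  intro t h0 h1
  rcases lt_trichotomy t c with h | h | h
  · rw [hΓlt t h]; exact hcase1 t h0 h
  · subst h; exact hcase2
  · exact hcase3 t h h1

/-- Global forward solutions converge to the origin. -/
lemma sol_tendsto {γ : ℝ → ℝ × ℝ}
    (hsol : ∀ t, 0 ≤ t → HasDerivAt γ (Xfun (γ t)) t) :
    Tendsto γ atTop (𝓝 (0 : ℝ × ℝ)) := by
  -- decay of the first coordinate
  have hwdecay : ∀ t, 0 ≤ t →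
      ((γ t).1) ^ 2 * Real.exp ((3/2) * t) ≤ ((γ 0).1) ^ 2 * Real.exp ((3/2) * 0) := by
    intro t ht
    refine decay_lemma (convex_Ici 0) (fun s hs => hasDerivAt_sol_w (hsol s hs)) ?_
      0 self_mem_Ici t ht ht
    intro s _
    set x := (γ s).1
    have key : 2 * x * (1 - (x + 1) ^ 3) + (3/2) * x^2
        = -(1/2) * (x * (2*x + 3))^2 := by ring
    nlinarith [sq_nonneg (x * (2*x + 3))]
  have hw0 : Tendsto (fun t => ((γ t).1) ^ 2) atTop (𝓝 0) := by
    apply tendsto_of_tendsto_of_tendsto_of_le_of_le'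
      (g := fun _ => (0:ℝ)) (h := fun t => ((γ 0).1) ^ 2 * Real.exp (-((3/2) * t)))
      tendsto_const_nhds
    · have h1 : Tendsto (fun t : ℝ => (3/2) * t) atTop atTop :=
        Tendsto.const_mul_atTop (by norm_num) tendsto_id
      have h2 : Tendsto (fun t : ℝ => Real.exp (-((3/2) * t))) atTop (𝓝 0) :=
        Real.tendsto_exp_neg_atTop_nhds_zero.comp h1
      simpa using h2.const_mul (((γ 0).1) ^ 2)
    · exact Eventually.of_forall fun t => sq_nonneg _
    · filter_upwards [eventually_ge_atTop (0:ℝ)] with t ht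
      have := hwdecay t ht
      simp only [mul_zero, Real.exp_zero, mul_one] at this
      have hepos : 0 < Real.exp ((3/2) * t) := Real.exp_pos _
      rw [Real.exp_neg, mul_comm (((γ 0).1)^2), ← div_eq_inv_mul, le_div_iff₀ hepos]
      linarith [this]
  have hx0 : Tendsto (fun t => (γ t).1) atTop (𝓝 0) := by
    rw [tendsto_zero_iff_abs_tendsto_zero]
    have h1 : Tendsto (fun t => Real.sqrt (((γ t).1) ^ 2)) atTop (𝓝 (Real.sqrt 0)) :=
      (Real.continuous_sqrt.continuousAt).tendsto.comp hw0
    rw [Real.sqrt_zero] at h1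
    convert h1 using 2 with t
    simp [Function.comp, Real.sqrt_sq_eq_abs]
  -- u² → 1
  have hu1 : Tendsto (fun t => (γ t).1 + 1) atTop (𝓝 1) := by
    simpa using hx0.add_const 1
  have hu2 : Tendsto (fun t => ((γ t).1 + 1) ^ 2) atTop (𝓝 1) := by
    simpa using hu1.pow 2
  -- second coordinate
  have hy0 : Tendsto (fun t => (γ t).2) atTop (𝓝 0) := by
    rw [Metric.tendsto_atTop]
    intro ε hε
    set ε' := ε / 32 with hε'def
    have hε' : 0 < ε' := by positivity
    obtain ⟨N1, hN1⟩ := Metric.tendsto_atTop.1 hu2 ε' hε'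
    obtain ⟨N2, hN2⟩ := Metric.tendsto_atTop.1 hu2 (1/2) (by norm_num)
    set T := max (max N1 N2) 0 with hT
    have hevE : ∀ᶠ t in atTop, ((γ t).2) ^ 2 ≤ 64 * ε' ^ 2 := by
      apply barrier_lemma (T := T) (δ := 16 * ε' ^ 2) (by positivity)
        (f' := fun t => 2 * (γ t).2 * (1 - ((γ t).1 + 1) ^ 2 * ((γ t).2 + 1)))
      · intro t ht
        exact hasDerivAt_sol_E (hsol t (le_trans (le_max_right _ _) ht))
      · intro t _; exact sq_nonneg _
      · intro t ht hEt
        have hTN1 : N1 ≤ t := le_trans (le_trans (le_max_left _ _) (le_max_left _ _)) ht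
        have hTN2 : N2 ≤ t := le_trans (le_trans (le_max_right _ _) (le_max_left _ _)) ht
        have h1 := hN1 t hTN1
        have h2 := hN2 t hTN2
        rw [Real.dist_eq] at h1 h2
        set a := (γ t).2
        set s := ((γ t).1 + 1) ^ 2
        have h1' := abs_lt.1 h1
        have h2' := abs_lt.1 h2
        have hs4 : 1/4 ≤ s := by linarith [h2'.1]
        have hsq : (1 - s) ^ 2 ≤ ε' ^ 2 := by nlinarith [h1'.1, h1'.2]
        have hsa : a ^ 2 / 4 ≤ s * a ^ 2 := by nlinarith [sq_nonneg a]
        nlinarith [sq_nonneg (a - 8 * (1 - s)), hEt, hsq, hsa]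
    rw [eventually_atTop] at hevE
    obtain ⟨N, hNE⟩ := hevE
    refine ⟨N, fun t ht => ?_⟩
    have h := hNE t ht
    have habs : |(γ t).2| ≤ 8 * ε' := by
      rw [← Real.sqrt_sq_eq_abs]
      calc Real.sqrt (((γ t).2) ^ 2) ≤ Real.sqrt (64 * ε' ^ 2) := Real.sqrt_le_sqrt h
        _ = 8 * ε' := by
            rw [show (64:ℝ) * ε' ^ 2 = (8 * ε') ^ 2 by ring, Real.sqrt_sq (by positivity)]
    rw [Real.dist_eq, sub_zero]
    calc |(γ t).2| ≤ 8 * ε' := habs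
      _ < ε := by rw [hε'def]; linarith
  have := hx0.prodMk_nhds hy0
  have heq : (fun t => ((γ t).1, (γ t).2)) = γ := by
    funext t; exact Prod.mk.eta
  rw [heq] at this
  simpa [Prod.mk_zero_zero] using this


set_option maxHeartbeats 1000000 in
/-- **Example (Proposition, part (a)).** The vector field
`X(x,y) = (-(x+1)³ + 1, -(x+1)²(y+1) + 1)` satisfies: (i) `(0,0)` is a hyperbolic
singularity; (ii) at every point with `x ≠ -1` the Jacobian has trace `-4(x+1)²` and
determinant `3(x+1)⁴`, and is Hurwitz; (iii) `X` is not injective, sending the whole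
line `{x = -1}` to `(1,1)`; (iv) `0` is globally asymptotically stable. -/
theorem example_noninjective_gas (X : ℝ × ℝ → ℝ × ℝ)
    (hX : ∀ x y : ℝ, X (x, y) = (-(x + 1) ^ 3 + 1, -(x + 1) ^ 2 * (y + 1) + 1)) :
    (X (0, 0) = (0, 0) ∧ IsHyperbolicSingularity X 0) ∧
    (∀ p : ℝ × ℝ, p.1 ≠ -1 →
      (jacMat X p).trace = -4 * (p.1 + 1) ^ 2 ∧
      (jacMat X p).det = 3 * (p.1 + 1) ^ 4 ∧
      IsHurwitz (jacMat X p)) ∧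
    (¬ Function.Injective X ∧ ∀ y : ℝ, X (-1, y) = (1, 1)) ∧
    (∀ (γ : ℝ → ℝ × ℝ) (b : ℝ≥0∞), IsMaximalForwardSol X γ b →
      b = ⊤ ∧ Tendsto γ atTop (𝓝 (0 : ℝ × ℝ))) := by
  have hXe : X = Xfun := by
    funext p
    obtain ⟨x, y⟩ := p
    exact hX x y
  subst hXe
  have hzero : Xfun (0, 0) = (0, 0) := by
    simp [Xfun]
  refine ⟨⟨hzero, ?_, ?_⟩, ?_, ⟨?_, ?_⟩, ?_⟩
  · -- Xfun 0 = 0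
    show Xfun (0, 0) = (0, 0)
    exact hzero
  · -- eigenvalues at 0 have nonzero real part
    intro z hz
    have h0 : ((0 : ℝ × ℝ)).1 = 0 := rfl
    rcases roots_jac 0 z hz with h | h <;> rw [h] <;> simp [h0] <;> norm_num
  · -- part (ii)
    intro p hp
    have hne : p.1 + 1 ≠ 0 := fun h => hp (by linarith)
    have hpos : 0 < (p.1 + 1) ^ 2 :=
      lt_of_le_of_ne (sq_nonneg _) (Ne.symm (pow_ne_zero 2 hne))
    refine ⟨trace_jac p, det_jac p, ?_⟩
    intro z hz
    rcases roots_jac p z hz with h | h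
    · have hre : (-((((p.1 + 1) ^ 2 : ℝ)) : ℂ)).re = -((p.1 + 1) ^ 2) := by
        rw [Complex.neg_re, Complex.ofReal_re]
      rw [h, hre]; linarith
    · have hre : ((-3 : ℂ) * ((((p.1 + 1) ^ 2 : ℝ)) : ℂ)).re = -(3 * ((p.1 + 1) ^ 2)) := by
        rw [show (-3 : ℂ) * ((((p.1 + 1) ^ 2 : ℝ)) : ℂ) = (((-3 * (p.1 + 1) ^ 2 : ℝ)) : ℂ) by
          push_cast; ring, Complex.ofReal_re]
        ring
      rw [h, hre]; linarith
  · -- not injective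
    intro hinj
    have h01 : Xfun (-1, 0) = Xfun (-1, 1) := by norm_num [Xfun]
    have := congrArg Prod.snd (hinj h01)
    norm_num at this
  · -- line to (1,1)
    intro y
    norm_num [Xfun]
  · -- part (iv)
    rintro γ b ⟨hb0, hsol, hmax⟩
    have hbtop : b = ⊤ := by
      by_contra hne
      set c := b.toReal with hcdef
      have hc : 0 < c := ENNReal.toReal_pos hb0.ne' hne
      have hb_eq : b = ENNReal.ofReal c := (ENNReal.ofReal_toReal hne).symm
      have hsol' : ∀ t, 0 ≤ t → t < c → HasDerivAt γ (Xfun (γ t)) t := by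
        intro t h0 h1
        exact hsol t h0 (by rw [hb_eq]; exact (ENNReal.ofReal_lt_ofReal_iff hc).2 h1)
      obtain ⟨Γ, ε, hε, hΓ, hagree⟩ := sol_extension hc hsol'
      refine hmax Γ (ENNReal.ofReal (c + ε)) ?_ ?_ ?_
      · rw [hb_eq]
        exact (ENNReal.ofReal_lt_ofReal_iff (by linarith)).2 (by linarith)
      · intro t h0 hlt
        refine hΓ t h0 ?_
        exact (ENNReal.ofReal_lt_ofReal_iff (by linarith)).1 hlt
      · intro t h0 hlt
        refine hagree t h0 ?_
        rw [hb_eq] at hlt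
        exact (ENNReal.ofReal_lt_ofReal_iff hc).1 hlt
    refine ⟨hbtop, ?_⟩
    have hsolAll : ∀ t, 0 ≤ t → HasDerivAt γ (Xfun (γ t)) t := fun t h0 =>
      hsol t h0 (by rw [hbtop]; exact ENNReal.ofReal_lt_top)
    exact sol_tendsto hsolAll
end

section
/- Consider the C¹ vector field Y : ℝ² → ℝ² defined by Y(x, y) = (−x³, −x²y). Then the singularity set of Y is exactly the line {(x, y) ∈ ℝ² : x = 0} (in particular it is a non-discrete set), and for every point p = (x, y) with x ≠ 0 (hence for Lebesgue-almost every p) the derivative DY(p) is Hurwitz. -/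
open MeasureTheory Filter Topology ENNReal

/-- **Example (Proposition, part (b)).** The vector field `Y(x,y) = (-x³, -x²y)` has
singularity set exactly the line `{(x,y) | x = 0}`, and at every point with `x ≠ 0`
its derivative is Hurwitz. -/
theorem example_line_of_singularities (Y : ℝ × ℝ → ℝ × ℝ)
    (hY : ∀ x y : ℝ, Y (x, y) = (-x ^ 3, -x ^ 2 * y)) :
    {p : ℝ × ℝ | Y p = 0} = {p : ℝ × ℝ | p.1 = 0} ∧
      ∀ p : ℝ × ℝ, p.1 ≠ 0 → IsHurwitz (jacMat Y p) := by

  have hYeq : Y = fun p : ℝ × ℝ => (-p.1 ^ 3, -p.1 ^ 2 * p.2) := by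
    funext p; exact hY p.1 p.2
  have hfd : ∀ p : ℝ × ℝ, HasFDerivAt Y
      ((-((p.1 * p.1) • ContinuousLinearMap.fst ℝ ℝ ℝ +
          p.1 • (p.1 • ContinuousLinearMap.fst ℝ ℝ ℝ + p.1 • ContinuousLinearMap.fst ℝ ℝ ℝ))).prod
        ((-(p.1 * p.1)) • ContinuousLinearMap.snd ℝ ℝ ℝ +
          p.2 • (-(p.1 • ContinuousLinearMap.fst ℝ ℝ ℝ + p.1 • ContinuousLinearMap.fst ℝ ℝ ℝ)))) p := by
    intro p
    rw [hYeq]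
    have e : (fun q : ℝ × ℝ => (-q.1 ^ 3, -q.1 ^ 2 * q.2))
        = fun q : ℝ × ℝ => (-(q.1 * q.1 * q.1), -(q.1 * q.1) * q.2) := by
      funext q; simp only [Prod.mk.injEq]; constructor <;> ring
    rw [e]
    exact HasFDerivAt.prodMk (HasFDerivAt.neg (HasFDerivAt.mul (HasFDerivAt.mul (hasFDerivAt_fst (p := p)) (hasFDerivAt_fst (p := p)))
      (hasFDerivAt_fst (p := p))))
      (HasFDerivAt.mul (HasFDerivAt.neg (HasFDerivAt.mul (hasFDerivAt_fst (p := p)) (hasFDerivAt_fst (p := p))))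
        (hasFDerivAt_snd (p := p)))
  have hjac : ∀ p : ℝ × ℝ, jacMat Y p = !![-3 * p.1 ^ 2, 0; -2 * p.1 * p.2, -p.1 ^ 2] := by
    intro p
    have hf := (hfd p).fderiv
    unfold jacMat
    rw [hf]
    ext i j
    fin_cases i <;> fin_cases j <;>
      simp [Matrix.of_apply, Matrix.cons_val_zero, Matrix.cons_val_one] <;> ring
  constructor
  · ext p
    simp only [Set.mem_setOf_eq, hYeq, Prod.mk_eq_zero, neg_eq_zero, pow_eq_zero_iff]
    constructor
    · rintro ⟨h1, -⟩
      exact pow_eq_zero_iff (by norm_num) |>.mp h1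
    · rintro h
      simp [h]
  · intro p hp z hz
    rw [hjac p] at hz
    have htr : (!![-3 * p.1 ^ 2, 0; -2 * p.1 * p.2, -p.1 ^ 2] : Matrix (Fin 2) (Fin 2) ℝ).trace
        = -4 * p.1 ^ 2 := by
      simp [Matrix.trace_fin_two]; ring
    have hdet : (!![-3 * p.1 ^ 2, 0; -2 * p.1 * p.2, -p.1 ^ 2] : Matrix (Fin 2) (Fin 2) ℝ).det
        = 3 * p.1 ^ 4 := by
      simp [Matrix.det_fin_two_of]; ring
    rw [htr, hdet] at hz
    have hfac : (z + (p.1:ℂ) ^ 2) * (z + 3 * (p.1:ℂ) ^ 2) = 0 := by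
      push_cast at hz ⊢
      linear_combination hz
    have hx2 : (0:ℝ) < p.1 ^ 2 := by positivity
    rcases mul_eq_zero.mp hfac with h | h
    · have hz' : z = -((p.1:ℂ) ^ 2) := by linear_combination h
      have : z.re = -(p.1 ^ 2) := by rw [hz']; simp [← Complex.ofReal_pow]
      linarith
    · have hz' : z = -(3 * (p.1:ℂ) ^ 2) := by linear_combination h
      have : z.re = -(3 * p.1 ^ 2) := by rw [hz']; simp [← Complex.ofReal_pow]
      linarith
end
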